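/- The state ρ = (1/6)(I − P) on ℂ^2 ⊗ ℂ^6, obtained from the paper's tripartite construction by grouping the factors as B | AC (qubit B versus the ℂ^3 ⊗ ℂ^2 ≅ ℂ^6 system AC), is separable: it can be written as a convex combination of projections onto product vectors across the B | AC cut, because the six vectors |φ_i⟩ extend to a full orthogonal product basis of ℂ^2 ⊗ ℂ^6 and ρ equals the uniform mixture of the six complementary product basis states. -/
import Mathlib


noncomputable section

def ket {n : ℕ} (k : Fin n) : Fin n → ℂ := fun j => if j = k then 1 else 0

def dif {n : ℕ} (a b : Fin n) : Fin n → ℂ :=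
  fun j => if j = a then 1 else if j = b then -1 else 0

def tp (u : Fin 3 → ℂ) (v w : Fin 2 → ℂ) : Fin 3 × Fin 2 × Fin 2 → ℂ :=
  fun p => u p.1 * v p.2.1 * w p.2.2

/-- The six normalized vectors `|φ_1⟩, …, |φ_6⟩` in `ℂ^3_A ⊗ ℂ^2_B ⊗ ℂ^2_C`. -/
def phi (i : Fin 6) : Fin 3 × Fin 2 × Fin 2 → ℂ :=
  match i with
  | 0 => (Real.sqrt 2 : ℂ)⁻¹ • tp (dif 0 1) (ket 0) (ket 0)
  | 1 => (Real.sqrt 2 : ℂ)⁻¹ • tp (dif 2 0) (ket 1) (ket 0)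
  | 2 => (Real.sqrt 2 : ℂ)⁻¹ • tp (ket 1) (ket 1) (dif 0 1)
  | 3 => (Real.sqrt 2 : ℂ)⁻¹ • tp (dif 1 2) (ket 0) (ket 1)
  | 4 => (Real.sqrt 2 : ℂ)⁻¹ • tp (ket 0) (dif 0 1) (ket 1)
  | 5 => (Real.sqrt 12 : ℂ)⁻¹ • tp (fun _ => 1) (fun _ => 1) (fun _ => 1)

/-- The grouping `AC ≅ ℂ^6`: `k ∈ Fin 6` corresponds to `(a, c) = (k / 2, k % 2)`. -/
def split6 (k : Fin 6) : Fin 3 × Fin 2 := (⟨k.val / 2, by omega⟩, ⟨k.val % 2, by omega⟩)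

/-- `|φ_i⟩` viewed across the `B | AC` cut, in `ℂ^2 ⊗ ℂ^6`. -/
def phiB (i : Fin 6) : Fin 2 × Fin 6 → ℂ :=
  fun p => phi i ((split6 p.2).1, p.1, (split6 p.2).2)

/-- The state `ρ = (1/6)(I − P)` on `ℂ^2 ⊗ ℂ^6`, `P = Σ_{i=1}^6 |φ_i⟩⟨φ_i|`. -/
def rhoB : Matrix (Fin 2 × Fin 6) (Fin 2 × Fin 6) ℂ :=
  (6 : ℂ)⁻¹ • ((1 : Matrix (Fin 2 × Fin 6) (Fin 2 × Fin 6) ℂ)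
    - ∑ i : Fin 6, Matrix.vecMulVec (phiB i) (star (phiB i)))

/-- A product vector across the `B | AC` cut. -/
def tpB (u : Fin 2 → ℂ) (v : Fin 6 → ℂ) : Fin 2 × Fin 6 → ℂ := fun p => u p.1 * v p.2

/-! ### Auxiliary material for the proof -/

/-- unnormalized B-parts of the completing product vectors -/
def U0 (i : Fin 6) : Fin 2 → ℂ :=
  match i with
  | 0 => dif 0 1
  | 1 => fun _ => 1
  | 2 => ket 0
  | 3 => ket 0
  | 4 => ket 1
  | 5 => ket 1

/-- unnormalized AC-parts of the completing product vectors -/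
def V0 (i : Fin 6) : Fin 6 → ℂ :=
  match i with
  | 0 => fun j => if j = 1 then 0 else 1
  | 1 => fun j => if j = 1 then -5 else 1
  | 2 => fun j => if j = 1 ∨ j = 4 then 0 else if j = 3 ∨ j = 5 then -1 else 1
  | 3 => fun j => if j = 1 then 0 else if j = 4 then -4 else 1
  | 4 => fun j => if j = 1 ∨ j = 5 then 0 else if j = 2 ∨ j = 3 then -1 else 1
  | 5 => fun j => if j = 1 then 0 else if j = 5 then -4 else 1

/-- normalized B-parts -/
def Uvec (i : Fin 6) : Fin 2 → ℂ :=
  match i with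
  | 0 => (Real.sqrt 2 : ℂ)⁻¹ • U0 0
  | 1 => (Real.sqrt 2 : ℂ)⁻¹ • U0 1
  | 2 => U0 2
  | 3 => U0 3
  | 4 => U0 4
  | 5 => U0 5

/-- normalized AC-parts -/
def Vvec (i : Fin 6) : Fin 6 → ℂ :=
  match i with
  | 0 => (Real.sqrt 5 : ℂ)⁻¹ • V0 0
  | 1 => (Real.sqrt 30 : ℂ)⁻¹ • V0 1
  | 2 => (2 : ℂ)⁻¹ • V0 2
  | 3 => (Real.sqrt 20 : ℂ)⁻¹ • V0 3
  | 4 => (2 : ℂ)⁻¹ • V0 4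
  | 5 => (Real.sqrt 20 : ℂ)⁻¹ • V0 5

/-- unnormalized versions of the `phiB` -/
def Phi0 (i : Fin 6) : Fin 2 × Fin 6 → ℂ :=
  match i with
  | 0 => fun p => tp (dif 0 1) (ket 0) (ket 0) ((split6 p.2).1, p.1, (split6 p.2).2)
  | 1 => fun p => tp (dif 2 0) (ket 1) (ket 0) ((split6 p.2).1, p.1, (split6 p.2).2)
  | 2 => fun p => tp (ket 1) (ket 1) (dif 0 1) ((split6 p.2).1, p.1, (split6 p.2).2)
  | 3 => fun p => tp (dif 1 2) (ket 0) (ket 1) ((split6 p.2).1, p.1, (split6 p.2).2)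
  | 4 => fun p => tp (ket 0) (dif 0 1) (ket 1) ((split6 p.2).1, p.1, (split6 p.2).2)
  | 5 => fun p => tp (fun _ => 1) (fun _ => 1) (fun _ => 1) ((split6 p.2).1, p.1, (split6 p.2).2)

def pc (i : Fin 6) : ℂ := match i with
  | 0 => 2⁻¹ | 1 => 2⁻¹ | 2 => 2⁻¹ | 3 => 2⁻¹ | 4 => 2⁻¹ | 5 => 12⁻¹

def qc (i : Fin 6) : ℂ := match i with
  | 0 => 10⁻¹ | 1 => 60⁻¹ | 2 => 4⁻¹ | 3 => 20⁻¹ | 4 => 4⁻¹ | 5 => 20⁻¹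

lemma vmv_smul {n : Type*} (c : ℂ) (x : n → ℂ) :
    Matrix.vecMulVec (c • x) (star (c • x)) = (c * star c) • Matrix.vecMulVec x (star x) := by
  ext i j
  simp [Matrix.vecMulVec_apply, Pi.smul_apply, Pi.star_apply, smul_eq_mul]
  ring

lemma sqrt_inv_mul_star (r : ℝ) (hr : 0 ≤ r) :
    (Real.sqrt r : ℂ)⁻¹ * star (Real.sqrt r : ℂ)⁻¹ = (r : ℂ)⁻¹ := by
  rw [← Complex.ofReal_inv, Complex.star_def, Complex.conj_ofReal, ← Complex.ofReal_mul,
    ← mul_inv, Real.mul_self_sqrt hr, Complex.ofReal_inv]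

lemma normSq_sqrt_inv (r : ℝ) (hr : 0 ≤ r) :
    Complex.normSq (Real.sqrt r : ℂ)⁻¹ = r⁻¹ := by
  rw [← Complex.ofReal_inv, Complex.normSq_ofReal, ← mul_inv, Real.mul_self_sqrt hr]

lemma tpB_smul (c d : ℂ) (u : Fin 2 → ℂ) (v : Fin 6 → ℂ) :
    tpB (c • u) (d • v) = (c * d) • tpB u v := by
  funext p
  simp [tpB, Pi.smul_apply, smul_eq_mul]
  ring

lemma tpB_smul_right (d : ℂ) (u : Fin 2 → ℂ) (v : Fin 6 → ℂ) :
    tpB u (d • v) = d • tpB u v := by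
  funext p
  simp [tpB, Pi.smul_apply, smul_eq_mul]
  ring

lemma hP (i : Fin 6) :
    Matrix.vecMulVec (phiB i) (star (phiB i))
      = pc i • Matrix.vecMulVec (Phi0 i) (star (Phi0 i)) := by
  fin_cases i
  · show Matrix.vecMulVec (phiB 0) (star (phiB 0)) = pc 0 • Matrix.vecMulVec (Phi0 0) (star (Phi0 0))
    rw [show phiB 0 = (Real.sqrt 2 : ℂ)⁻¹ • Phi0 0 from rfl, vmv_smul,
      sqrt_inv_mul_star 2 (by norm_num)]
    norm_num [pc]
  · show Matrix.vecMulVec (phiB 1) (star (phiB 1)) = pc 1 • Matrix.vecMulVec (Phi0 1) (star (Phi0 1))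
    rw [show phiB 1 = (Real.sqrt 2 : ℂ)⁻¹ • Phi0 1 from rfl, vmv_smul,
      sqrt_inv_mul_star 2 (by norm_num)]
    norm_num [pc]
  · show Matrix.vecMulVec (phiB 2) (star (phiB 2)) = pc 2 • Matrix.vecMulVec (Phi0 2) (star (Phi0 2))
    rw [show phiB 2 = (Real.sqrt 2 : ℂ)⁻¹ • Phi0 2 from rfl, vmv_smul,
      sqrt_inv_mul_star 2 (by norm_num)]
    norm_num [pc]
  · show Matrix.vecMulVec (phiB 3) (star (phiB 3)) = pc 3 • Matrix.vecMulVec (Phi0 3) (star (Phi0 3))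
    rw [show phiB 3 = (Real.sqrt 2 : ℂ)⁻¹ • Phi0 3 from rfl, vmv_smul,
      sqrt_inv_mul_star 2 (by norm_num)]
    norm_num [pc]
  · show Matrix.vecMulVec (phiB 4) (star (phiB 4)) = pc 4 • Matrix.vecMulVec (Phi0 4) (star (Phi0 4))
    rw [show phiB 4 = (Real.sqrt 2 : ℂ)⁻¹ • Phi0 4 from rfl, vmv_smul,
      sqrt_inv_mul_star 2 (by norm_num)]
    norm_num [pc]
  · show Matrix.vecMulVec (phiB 5) (star (phiB 5)) = pc 5 • Matrix.vecMulVec (Phi0 5) (star (Phi0 5))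
    rw [show phiB 5 = (Real.sqrt 12 : ℂ)⁻¹ • Phi0 5 from rfl, vmv_smul,
      sqrt_inv_mul_star 12 (by norm_num)]
    norm_num [pc]

lemma hQ (i : Fin 6) :
    Matrix.vecMulVec (tpB (Uvec i) (Vvec i)) (star (tpB (Uvec i) (Vvec i)))
      = qc i • Matrix.vecMulVec (tpB (U0 i) (V0 i)) (star (tpB (U0 i) (V0 i))) := by
  fin_cases i
  · show Matrix.vecMulVec (tpB (Uvec 0) (Vvec 0)) (star (tpB (Uvec 0) (Vvec 0)))
      = qc 0 • Matrix.vecMulVec (tpB (U0 0) (V0 0)) (star (tpB (U0 0) (V0 0)))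
    rw [show tpB (Uvec 0) (Vvec 0) = (((Real.sqrt 2 : ℂ)⁻¹) * ((Real.sqrt 5 : ℂ)⁻¹)) • tpB (U0 0) (V0 0) by
        rw [← tpB_smul]; rfl, vmv_smul]
    congr 1
    rw [star_mul', show (((Real.sqrt 2 : ℂ)⁻¹) * ((Real.sqrt 5 : ℂ)⁻¹)) * (star ((Real.sqrt 2 : ℂ)⁻¹) * star ((Real.sqrt 5 : ℂ)⁻¹))
      = (((Real.sqrt 2 : ℂ)⁻¹) * star ((Real.sqrt 2 : ℂ)⁻¹)) * (((Real.sqrt 5 : ℂ)⁻¹) * star ((Real.sqrt 5 : ℂ)⁻¹)) by ring]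
    rw [sqrt_inv_mul_star 2 (by norm_num), sqrt_inv_mul_star 5 (by norm_num)]
    norm_num [qc]
  · show Matrix.vecMulVec (tpB (Uvec 1) (Vvec 1)) (star (tpB (Uvec 1) (Vvec 1)))
      = qc 1 • Matrix.vecMulVec (tpB (U0 1) (V0 1)) (star (tpB (U0 1) (V0 1)))
    rw [show tpB (Uvec 1) (Vvec 1) = (((Real.sqrt 2 : ℂ)⁻¹) * ((Real.sqrt 30 : ℂ)⁻¹)) • tpB (U0 1) (V0 1) by
        rw [← tpB_smul]; rfl, vmv_smul]
    congr 1
    rw [star_mul', show (((Real.sqrt 2 : ℂ)⁻¹) * ((Real.sqrt 30 : ℂ)⁻¹)) * (star ((Real.sqrt 2 : ℂ)⁻¹) * star ((Real.sqrt 30 : ℂ)⁻¹))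
      = (((Real.sqrt 2 : ℂ)⁻¹) * star ((Real.sqrt 2 : ℂ)⁻¹)) * (((Real.sqrt 30 : ℂ)⁻¹) * star ((Real.sqrt 30 : ℂ)⁻¹)) by ring]
    rw [sqrt_inv_mul_star 2 (by norm_num), sqrt_inv_mul_star 30 (by norm_num)]
    norm_num [qc]
  · show Matrix.vecMulVec (tpB (Uvec 2) (Vvec 2)) (star (tpB (Uvec 2) (Vvec 2)))
      = qc 2 • Matrix.vecMulVec (tpB (U0 2) (V0 2)) (star (tpB (U0 2) (V0 2)))
    rw [show Uvec 2 = U0 2 from rfl, show Vvec 2 = ((2:ℂ)⁻¹) • V0 2 from rfl,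
      tpB_smul_right, vmv_smul]
    congr 1
    rw [show ((2:ℂ)⁻¹) * star ((2:ℂ)⁻¹) = 4⁻¹ by norm_num]
    norm_num [qc]
  · show Matrix.vecMulVec (tpB (Uvec 3) (Vvec 3)) (star (tpB (Uvec 3) (Vvec 3)))
      = qc 3 • Matrix.vecMulVec (tpB (U0 3) (V0 3)) (star (tpB (U0 3) (V0 3)))
    rw [show Uvec 3 = U0 3 from rfl, show Vvec 3 = ((Real.sqrt 20 : ℂ)⁻¹) • V0 3 from rfl,
      tpB_smul_right, vmv_smul]
    congr 1
    rw [sqrt_inv_mul_star 20 (by norm_num)]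
    norm_num [qc]
  · show Matrix.vecMulVec (tpB (Uvec 4) (Vvec 4)) (star (tpB (Uvec 4) (Vvec 4)))
      = qc 4 • Matrix.vecMulVec (tpB (U0 4) (V0 4)) (star (tpB (U0 4) (V0 4)))
    rw [show Uvec 4 = U0 4 from rfl, show Vvec 4 = ((2:ℂ)⁻¹) • V0 4 from rfl,
      tpB_smul_right, vmv_smul]
    congr 1
    rw [show ((2:ℂ)⁻¹) * star ((2:ℂ)⁻¹) = 4⁻¹ by norm_num]
    norm_num [qc]
  · show Matrix.vecMulVec (tpB (Uvec 5) (Vvec 5)) (star (tpB (Uvec 5) (Vvec 5)))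
      = qc 5 • Matrix.vecMulVec (tpB (U0 5) (V0 5)) (star (tpB (U0 5) (V0 5)))
    rw [show Uvec 5 = U0 5 from rfl, show Vvec 5 = ((Real.sqrt 20 : ℂ)⁻¹) • V0 5 from rfl,
      tpB_smul_right, vmv_smul]
    congr 1
    rw [sqrt_inv_mul_star 20 (by norm_num)]
    norm_num [qc]

set_option maxHeartbeats 2000000 in
lemma key : (1 : Matrix (Fin 2 × Fin 6) (Fin 2 × Fin 6) ℂ)
    = (∑ i, pc i • Matrix.vecMulVec (Phi0 i) (star (Phi0 i)))
      + ∑ i, qc i • Matrix.vecMulVec (tpB (U0 i) (V0 i)) (star (tpB (U0 i) (V0 i))) := by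
  ext ⟨b, k⟩ ⟨b', k'⟩
  fin_cases b <;> fin_cases b' <;> fin_cases k <;> fin_cases k' <;>
    · simp only [Fin.sum_univ_six, Matrix.add_apply, Matrix.smul_apply, Matrix.one_apply,
        Matrix.vecMulVec_apply, Pi.star_apply, pc, qc, Phi0, tpB, U0, V0, tp, dif, ket, split6,
        Fin.isValue]
      norm_num [Fin.ext_iff, Prod.ext_iff,
        show ((1 : Fin 6) : ℕ) = 1 from rfl, show ((2 : Fin 6) : ℕ) = 2 from rfl,
        show ((3 : Fin 6) : ℕ) = 3 from rfl, show ((4 : Fin 6) : ℕ) = 4 from rfl,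
        show ((5 : Fin 6) : ℕ) = 5 from rfl, show ((1 : Fin 3) : ℕ) = 1 from rfl,
        show ((2 : Fin 3) : ℕ) = 2 from rfl, show ((1 : Fin 2) : ℕ) = 1 from rfl]

/-- `ρ` is separable across the `B | AC` cut: it is a convex combination of
projections onto (unit) product vectors of `ℂ^2 ⊗ ℂ^6`. -/
theorem stmt18 :
    ∃ (N : ℕ) (w : Fin N → ℝ) (u : Fin N → (Fin 2 → ℂ)) (v : Fin N → (Fin 6 → ℂ)),
      (∀ i, 0 ≤ w i) ∧ (∑ i, w i = 1) ∧
      (∀ i, ∑ j, Complex.normSq (u i j) = 1) ∧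
      (∀ i, ∑ j, Complex.normSq (v i j) = 1) ∧
      rhoB = ∑ i, (w i : ℂ) •
        Matrix.vecMulVec (tpB (u i) (v i)) (star (tpB (u i) (v i))) := by
  refine ⟨6, fun _ => 6⁻¹, Uvec, Vvec, fun i => by norm_num, by norm_num, ?_, ?_, ?_⟩
  · intro i
    fin_cases i <;>
      simp [Uvec, U0, dif, ket, Fin.sum_univ_two, Complex.normSq_mul,
        normSq_sqrt_inv 2 (by norm_num : (0:ℝ) ≤ 2)] <;> norm_num
  · intro i
    fin_cases i <;>
      simp [Vvec, V0, Fin.sum_univ_six, Complex.normSq_mul,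
        normSq_sqrt_inv 5 (by norm_num : (0:ℝ) ≤ 5),
        normSq_sqrt_inv 30 (by norm_num : (0:ℝ) ≤ 30),
        normSq_sqrt_inv 20 (by norm_num : (0:ℝ) ≤ 20)] <;> norm_num
  · have hsum : ∑ i, Matrix.vecMulVec (phiB i) (star (phiB i))
        = ∑ i, pc i • Matrix.vecMulVec (Phi0 i) (star (Phi0 i)) :=
      Finset.sum_congr rfl fun i _ => hP i
    have h1 : (1 : Matrix (Fin 2 × Fin 6) (Fin 2 × Fin 6) ℂ)
        - ∑ i, pc i • Matrix.vecMulVec (Phi0 i) (star (Phi0 i))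
        = ∑ i, qc i • Matrix.vecMulVec (tpB (U0 i) (V0 i)) (star (tpB (U0 i) (V0 i))) := by
      rw [key]; exact add_sub_cancel_left _ _
    rw [rhoB, hsum, h1, Finset.smul_sum]
    refine Finset.sum_congr rfl fun i _ => ?_
    rw [hQ i]
    congr 1
    norm_num
  done

end
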